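/- In a k-x-basic read-once formula, if a vertex u is labeled by an unforceable gate (not ∧, ∨, or a variable) and σ is ε-far from making Φ_u evaluate to b, then u has at least two heavy children. -/

import Mathlib

/-- Read-once formula trees over variable set `X`: leaves are variables (possibly
negated), internal nodes are `∧`/`∨` gates of unbounded arity or general Boolean
gates given by a function on the list of children values. -/
inductive Fla (X : Type) where
  | leaf : X → Fla X
  | neg : X → Fla X
  | and : List (Fla X) → Fla X
  | or : List (Fla X) → Fla X
  | gate : (List Bool → Bool) → List (Fla X) → Fla X

namespace Fla
variable {X : Type}

/-- Evaluation of a formula under an assignment. -/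
def eval (σ : X → Bool) : Fla X → Bool
  | leaf x => σ x
  | neg x => !σ x
  | and l => l.attach.all (fun ⟨φ, _⟩ => eval σ φ)
  | or l => l.attach.any (fun ⟨φ, _⟩ => eval σ φ)
  | gate f l => f (l.attach.map (fun ⟨φ, _⟩ => eval σ φ))

/-- The list of variables occurring in a formula (with multiplicity). -/
def vars : Fla X → List X
  | leaf x => [x]
  | neg x => [x]
  | and l => l.attach.flatMap (fun ⟨φ, _⟩ => vars φ)
  | or l => l.attach.flatMap (fun ⟨φ, _⟩ => vars φ)
  | gate _ l => l.attach.flatMap (fun ⟨φ, _⟩ => vars φ)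

/-- The size `|Φ|` of a formula: the number of (occurrences of) variables. -/
def size (φ : Fla X) : ℕ := (vars φ).length

/-- A formula is read-once when no variable occurs twice. -/
def ReadOnce (φ : Fla X) : Prop := (vars φ).Nodup

/-- Relative Hamming distance between two assignments, measured over the
variables of `φ`. -/
noncomputable def hamming (φ : Fla X) (σ σ' : X → Bool) : ℝ :=
  ((vars φ).countP (fun x => σ x != σ' x) : ℝ) / (size φ : ℝ)

/-- `σ` is `ε`-far from making `φ` evaluate to `b`. -/
def EpsFar (φ : Fla X) (b : Bool) (σ : X → Bool) (ε : ℝ) : Prop :=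
  ∀ σ', eval σ' φ = b → ε ≤ hamming φ σ σ'

/-- `σ` is `ε`-close to making `φ` evaluate to `b`. -/
def EpsClose (φ : Fla X) (b : Bool) (σ : X → Bool) (ε : ℝ) : Prop :=
  ∃ σ', eval σ' φ = b ∧ hamming φ σ σ' ≤ ε

/-- The children of the root. -/
def children : Fla X → List (Fla X)
  | and l => l
  | or l => l
  | gate _ l => l
  | _ => []

def isAnd : Fla X → Prop
  | and _ => True
  | _ => False

def isOr : Fla X → Prop
  | or _ => True
  | _ => False

/-- The `i`-th input of the `n`-ary gate `f` is `(a,b)`-forceful. -/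
def Forceful (f : List Bool → Bool) (n i : ℕ) : Prop :=
  ∃ a b : Bool, ∀ l : List Bool, l.length = n → l[i]? = some a → f l = b

/-- An `n`-ary gate is unforceable if no input is forceful. -/
def Unforceable (f : List Bool → Bool) (n : ℕ) : Prop :=
  ∀ i < n, ¬ Forceful f n i

/-- `k`-`x`-basic formulas. -/
inductive KxBasic (k : ℕ) : Fla X → Prop where
  | leaf (x : X) : KxBasic k (.leaf x)
  | neg (x : X) : KxBasic k (.neg x)
  | and (l : List (Fla X)) : 2 ≤ l.length → (∀ φ ∈ l, KxBasic k φ) →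
      (∀ φ ∈ l, ¬ isAnd φ) → KxBasic k (.and l)
  | or (l : List (Fla X)) : 2 ≤ l.length → (∀ φ ∈ l, KxBasic k φ) →
      (∀ φ ∈ l, ¬ isOr φ) → KxBasic k (.or l)
  | gate (f : List Bool → Bool) (l : List (Fla X)) : 2 ≤ l.length → l.length ≤ k →
      Unforceable f l.length → (∀ φ ∈ l, KxBasic k φ) → KxBasic k (.gate f l)

/-- Basic formulas: only `∧`/`∨` gates, alternating, negations at leaves. -/
inductive BasicF : Fla X → Prop where
  | leaf (x : X) : BasicF (.leaf x)
  | neg (x : X) : BasicF (.neg x)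
  | and (l : List (Fla X)) : 2 ≤ l.length → (∀ φ ∈ l, BasicF φ) →
      (∀ φ ∈ l, ¬ isAnd φ) → BasicF (.and l)
  | or (l : List (Fla X)) : 2 ≤ l.length → (∀ φ ∈ l, BasicF φ) →
      (∀ φ ∈ l, ¬ isOr φ) → BasicF (.or l)

end Fla

namespace Fla
variable {X : Type}

/-- The sizes of the children of the root, sorted in non-increasing order. -/
def sortedChildSizes (φ : Fla X) : List ℕ :=
  ((children φ).map size).mergeSort (fun a b => decide (b ≤ a))

open Classical in
/-- `ℓ(u,ε)`: the smallest `ℓ ≥ 1` such that the `ℓ`-th largest child of `u` has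
size less than `|Φ_u| (4k/ε)^{-ℓ}` (i.e. `|Φ_u| (ε/4k)^{ℓ}`) if such an `ℓ`
exists among the children, and `k+1` otherwise. -/
noncomputable def ell (k : ℕ) (ε : ℝ) (φ : Fla X) : ℕ :=
  if h : ∃ i, 1 ≤ i ∧ i ≤ (sortedChildSizes φ).length ∧
      (((sortedChildSizes φ).getD (i - 1) 0 : ℝ) < (size φ : ℝ) * (ε / (4 * k)) ^ i)
  then Nat.find h else k + 1

/-- The number of heavy children of the root: the `ℓ-1` largest children are
heavy (all children, if there are fewer than `ℓ-1`). -/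
noncomputable def heavyCount (k : ℕ) (ε : ℝ) (φ : Fla X) : ℕ :=
  min (ell k ε φ - 1) (children φ).length

end Fla

/-!
Suppose `u` had at most one heavy child. Then `ℓ ≤ 2`, so every child other than a largest one
is smaller than `|Φ_u| ε / (4k)`, and these at most `k - 1` children carry less than an
`ε`-fraction of the variables of `Φ_u`. As the gate is unforceable, the current value of the
largest child does not force the output, so some input vector extending it yields `b`. Read-once
`k`-`x`-basic formulas can be set to either value by changing only their own variables, so the
other children can be reset to that vector while the largest child is left untouched: this
changes fewer than an `ε`-fraction of the variables, contradicting `ε`-farness.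
-/

namespace Fla
variable {X : Type}

@[simp] lemma vars_and (l : List (Fla X)) : vars (.and l) = l.flatMap vars := by simp [vars]
@[simp] lemma vars_or (l : List (Fla X)) : vars (.or l) = l.flatMap vars := by simp [vars]
@[simp] lemma vars_gate (f : List Bool → Bool) (l : List (Fla X)) :
    vars (.gate f l) = l.flatMap vars := by simp [vars]

theorem eval_and (σ : X → Bool) (l : List (Fla X)) :
    eval σ (.and l) = (l.map (eval σ)).all id := by
  simp [eval]
theorem eval_or (σ : X → Bool) (l : List (Fla X)) :
    eval σ (.or l) = (l.map (eval σ)).any id := by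
  simp [eval]
theorem eval_gate (σ : X → Bool) (f : List Bool → Bool) (l : List (Fla X)) :
    eval σ (.gate f l) = f (l.map (eval σ)) := by
  simp [eval]

theorem eval_congr {σ σ' : X → Bool} :
    ∀ φ : Fla X, (∀ x ∈ vars φ, σ x = σ' x) → eval σ φ = eval σ' φ
  | leaf x, h => by simpa [eval, vars] using h
  | neg x, h => by simpa [eval, vars] using h
  | .and l, h => by rw [eval_and, eval_and, map_eval_congr l (by simpa using h)]
  | .or l, h => by rw [eval_or, eval_or, map_eval_congr l (by simpa using h)]
  | gate f l, h => by rw [eval_gate, eval_gate, map_eval_congr l (by simpa using h)]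
where
  map_eval_congr (l : List (Fla X)) (h : ∀ x ∈ l.flatMap vars, σ x = σ' x) :
      l.map (eval σ) = l.map (eval σ') :=
    List.map_congr_left fun ψ hψ => eval_congr ψ fun x hx => h x (List.mem_flatMap.2 ⟨ψ, hψ, hx⟩)

def Realizable (φ : Fla X) : Prop :=
  ∀ (b : Bool) (σ : X → Bool), ∃ σ', eval σ' φ = b ∧ ∀ x ∉ vars φ, σ' x = σ x

theorem readOnce_of_mem {l : List (Fla X)} (hl : (l.flatMap vars).Nodup) {ψ : Fla X} (hψ : ψ ∈ l) :
    ψ.ReadOnce :=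
  (List.nodup_flatMap.1 hl).1 ψ hψ

theorem eq_of_mem_vars_of_nodup_flatMap {l : List (Fla X)} (hl : (l.flatMap vars).Nodup) {x : X}
    {i j : ℕ} (hi : i < l.length) (hj : j < l.length) (hxi : x ∈ vars l[i])
    (hxj : x ∈ vars l[j]) : i = j := by
  have hdisj := List.pairwise_iff_getElem.1 (List.nodup_flatMap.1 hl).2
  by_contra hne
  rcases Nat.lt_or_gt_of_ne hne with h | h
  · exact hdisj i j hi hj h hxi hxj
  · exact hdisj j i hj hi h hxj hxi

theorem exists_map_eval_eq {l : List (Fla X)} (hl : (l.flatMap vars).Nodup)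
    (hreal : ∀ ψ ∈ l, Realizable ψ) (v : List Bool) (hv : v.length = l.length) (σ : X → Bool) :
    ∃ σ', l.map (eval σ') = v ∧ (∀ x ∉ l.flatMap vars, σ' x = σ x) ∧
      ∀ i (hi : i < l.length), eval σ l[i] = v[i] → ∀ x ∈ vars l[i], σ' x = σ x := by
  classical
  have hchild : ∀ i (hi : i < l.length), ∃ τ : X → Bool, eval τ l[i] = v[i] ∧
      (∀ x ∉ vars l[i], τ x = σ x) ∧ (eval σ l[i] = v[i] → τ = σ) := by
    intro i hi
    by_cases hσ : eval σ l[i] = v[i]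
    · exact ⟨σ, hσ, fun _ _ => rfl, fun _ => rfl⟩
    · obtain ⟨τ, hτ, hτout⟩ := hreal _ (l.getElem_mem hi) v[i] σ
      exact ⟨τ, hτ, hτout, fun h => absurd h hσ⟩
  choose τ hτ hτout hτkeep using hchild
  let σ' : X → Bool := fun x =>
    if h : ∃ i, ∃ hi : i < l.length, x ∈ vars l[i] then τ h.choose h.choose_spec.choose x else σ x
  have hσ' : ∀ i (hi : i < l.length), ∀ x ∈ vars l[i], σ' x = τ i hi x := by
    intro i hi x hx
    have h : ∃ i, ∃ hi : i < l.length, x ∈ vars l[i] := ⟨i, hi, hx⟩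
    obtain rfl := eq_of_mem_vars_of_nodup_flatMap hl h.choose_spec.choose hi
      h.choose_spec.choose_spec hx
    simp only [σ', dif_pos h]
  refine ⟨σ', ?_, ?_, ?_⟩
  · refine List.ext_getElem (by simp [hv]) fun i hi _ => ?_
    rw [List.getElem_map, eval_congr _ (hσ' i (by simpa using hi)), hτ]
  · intro x hx
    have h : ¬ ∃ i, ∃ hi : i < l.length, x ∈ vars l[i] := by
      rintro ⟨i, hi, hxi⟩
      exact hx (List.mem_flatMap.2 ⟨_, l.getElem_mem hi, hxi⟩)
    simp only [σ', dif_neg h]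
  · intro i hi hσ x hx
    rw [hσ' i hi x hx, hτkeep i hi hσ]

theorem realizable_of_map_eval {φ : Fla X} {l : List (Fla X)} (g : List Bool → Bool)
    (heval : ∀ σ, eval σ φ = g (l.map (eval σ))) (hvars : vars φ = l.flatMap vars)
    (hl : (l.flatMap vars).Nodup) (hreal : ∀ ψ ∈ l, Realizable ψ)
    (hg : ∀ b, ∃ v : List Bool, v.length = l.length ∧ g v = b) : Realizable φ := by
  intro b σ
  obtain ⟨v, hv, hgv⟩ := hg b
  obtain ⟨σ', hσ', hout, -⟩ := exists_map_eval_eq hl hreal v hv σ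
  exact ⟨σ', by rw [heval, hσ', hgv], hvars ▸ hout⟩

theorem Unforceable.exists_eq {f : List Bool → Bool} {n i : ℕ} (hf : Unforceable f n) (hi : i < n)
    (a b : Bool) : ∃ v : List Bool, v.length = n ∧ v[i]? = some a ∧ f v = b := by
  have h := hf i hi
  simp only [Forceful, not_exists, not_forall] at h
  obtain ⟨v, hv, hva, hfv⟩ := h a (!b)
  exact ⟨v, hv, hva, by simpa using hfv⟩

theorem KxBasic.realizable {k : ℕ} {φ : Fla X} (h : KxBasic k φ) (hro : φ.ReadOnce) :
    Realizable φ := by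
  classical
  induction h with
  | leaf y =>
    intro b σ
    exact ⟨Function.update σ y b, by simp [eval],
      fun x hx => Function.update_of_ne (by simpa [vars] using hx) _ _⟩
  | neg y =>
    intro b σ
    exact ⟨Function.update σ y (!b), by simp [eval],
      fun x hx => Function.update_of_ne (by simpa [vars] using hx) _ _⟩
  | and l hlen _ _ ih =>
    rw [ReadOnce, vars_and] at hro
    refine realizable_of_map_eval (·.all id) (eval_and · l) (vars_and l) hro
      (fun ψ hψ => ih ψ hψ (readOnce_of_mem hro hψ)) fun b => ?_
    have hne : l ≠ [] := List.ne_nil_of_length_pos (by omega)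
    exact ⟨List.replicate l.length b, by simp, by simp [hne]⟩
  | or l hlen _ _ ih =>
    rw [ReadOnce, vars_or] at hro
    refine realizable_of_map_eval (·.any id) (eval_or · l) (vars_or l) hro
      (fun ψ hψ => ih ψ hψ (readOnce_of_mem hro hψ)) fun b => ?_
    have hne : l ≠ [] := List.ne_nil_of_length_pos (by omega)
    exact ⟨List.replicate l.length b, by simp, by simp [hne]⟩
  | gate f l hlen _ hf _ ih =>
    rw [ReadOnce, vars_gate] at hro
    refine realizable_of_map_eval f (eval_gate · f l) (vars_gate f l) hro
      (fun ψ hψ => ih ψ hψ (readOnce_of_mem hro hψ)) fun b => ?_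
    obtain ⟨v, hv, -, hfv⟩ := hf.exists_eq (by omega : 0 < l.length) true b
    exact ⟨v, hv, hfv⟩

theorem exists_eval_gate_eq_of_unforceable {f : List Bool → Bool} {l : List (Fla X)}
    (hl : (l.flatMap vars).Nodup) (hreal : ∀ ψ ∈ l, Realizable ψ) (hf : Unforceable f l.length)
    {j : ℕ} (hj : j < l.length) (b : Bool) (σ : X → Bool) :
    ∃ σ', eval σ' (.gate f l) = b ∧ ∀ x ∈ vars l[j], σ' x = σ x := by
  obtain ⟨v, hv, hvj, hfv⟩ := hf.exists_eq hj (eval σ l[j]) b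
  obtain ⟨σ', hσ', -, hkeep⟩ := exists_map_eval_eq hl hreal v hv σ
  refine ⟨σ', by rw [eval_gate, hσ', hfv], hkeep j hj ?_⟩
  rw [List.getElem?_eq_getElem (hv ▸ hj)] at hvj
  exact (Option.some.inj hvj).symm

theorem hamming_le_one (φ : Fla X) (σ σ' : X → Bool) : hamming φ σ σ' ≤ 1 :=
  div_le_one_of_le₀ (mod_cast List.countP_le_length) (Nat.cast_nonneg _)

theorem Realizable.le_one_of_epsFar {φ : Fla X} (hφ : Realizable φ) {b : Bool} {σ : X → Bool}
    {ε : ℝ} (hfar : EpsFar φ b σ ε) : ε ≤ 1 := by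
  obtain ⟨σ', hσ', -⟩ := hφ b σ
  exact (hfar σ' hσ').trans (hamming_le_one φ σ σ')

theorem hamming_le_of_sublist {φ ψ : Fla X} (hsub : (vars ψ).Sublist (vars φ)) {σ σ' : X → Bool}
    (h : ∀ x ∈ vars ψ, σ' x = σ x) :
    hamming φ σ σ' ≤ ((size φ : ℝ) - size ψ) / size φ := by
  set p : X → Bool := fun x => σ x != σ' x
  have hψ : (vars ψ).countP (fun x => ¬ p x) = size ψ :=
    List.countP_eq_length.2 fun x hx => by simp [p, h x hx]
  have hcount : (vars φ).countP p + size ψ ≤ size φ :=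
    calc (vars φ).countP p + size ψ = (vars φ).countP p + (vars ψ).countP (¬ p ·) := by rw [hψ]
      _ ≤ (vars φ).countP p + (vars φ).countP (¬ p ·) := Nat.add_le_add_left hsub.countP_le _
      _ = size φ := (List.length_eq_countP_add_countP p).symm
  have hcount' : ((vars φ).countP p : ℝ) ≤ size φ - size ψ := by
    rw [le_sub_iff_add_le]; exact_mod_cast hcount
  exact div_le_div_of_nonneg_right hcount' (Nat.cast_nonneg _)

theorem vars_sublist_vars_gate {f : List Bool → Bool} {l : List (Fla X)} {ψ : Fla X} (hψ : ψ ∈ l) :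
    (vars ψ).Sublist (vars (.gate f l)) := by
  rw [vars_gate, List.flatMap_def]
  exact (List.infix_of_mem_flatten (List.mem_map_of_mem hψ)).sublist

theorem size_gate (f : List Bool → Bool) (l : List (Fla X)) :
    size (.gate f l) = (l.map size).sum := by
  simp [size, List.length_flatMap]; rfl

theorem sortedChildSizes_perm (φ : Fla X) :
    (sortedChildSizes φ).Perm ((children φ).map size) :=
  List.mergeSort_perm _ _

theorem sortedChildSizes_pairwise (φ : Fla X) : (sortedChildSizes φ).Pairwise (· ≥ ·) := by
  have := List.pairwise_mergeSort (le := fun a b : ℕ => decide (b ≤ a))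
    (fun a b c hab hbc => by simp only [decide_eq_true_eq] at *; omega)
    (fun a b => by simp [Nat.le_total b a]) ((children φ).map size)
  exact this.imp (by simp)

theorem getD_one_le_getD_zero {s : List ℕ} (hs : s.Pairwise (· ≥ ·)) : s.getD 1 0 ≤ s.getD 0 0 := by
  match s, hs with
  | [], _ | [_], _ => simp
  | a :: b :: t, hs => simpa using (List.pairwise_cons.1 hs).1 b (by simp)

theorem sum_tail_le_of_pairwise {s : List ℕ} (hs : s.Pairwise (· ≥ ·)) :
    s.tail.sum ≤ s.tail.length * s.getD 1 0 := by
  match s, hs with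
  | [], _ | [_], _ => simp
  | a :: b :: t, hs =>
    have hbt := (List.pairwise_cons.1 (List.pairwise_cons.1 hs).2)
    simpa using List.sum_le_card_nsmul (b :: t) b fun x hx => by
      rcases List.mem_cons.1 hx with rfl | hx
      exacts [le_rfl, hbt.1 x hx]

/-- `l[j]` is a largest child; each of the other `l.length - 1` children is at most the second
largest size. -/
theorem exists_size_gate_le {f : List Bool → Bool} {l : List (Fla X)} (hl : l ≠ []) :
    ∃ j, ∃ hj : j < l.length, size (.gate f l) ≤
      size l[j] + (l.length - 1) * (sortedChildSizes (.gate f l)).getD 1 0 := by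
  set s := sortedChildSizes (.gate f l)
  have hperm : s.Perm (l.map size) := sortedChildSizes_perm _
  obtain ⟨a, t, hs⟩ : ∃ a t, s = a :: t :=
    List.exists_cons_of_ne_nil fun h => hl (by simpa [h] using hperm.length_eq.symm)
  obtain ⟨j, hj, hja⟩ := List.getElem_of_mem (hperm.subset (by simp [hs] : a ∈ s))
  rw [List.getElem_map] at hja
  refine ⟨j, by simpa using hj, ?_⟩
  have htail : s.tail.sum ≤ s.tail.length * s.getD 1 0 :=
    sum_tail_le_of_pairwise (sortedChildSizes_pairwise _)
  have hlen : t.length = l.length - 1 := by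
    have := hperm.length_eq; simp only [hs, List.length_cons, List.length_map] at this; omega
  rw [size_gate, ← hperm.sum_eq, hja]
  simpa [hs, hlen] using htail

theorem ell_spec (k : ℕ) (ε : ℝ) (φ : Fla X) :
    ell k ε φ = k + 1 ∨ (1 ≤ ell k ε φ ∧
      ((sortedChildSizes φ).getD (ell k ε φ - 1) 0 : ℝ) < size φ * (ε / (4 * k)) ^ ell k ε φ) := by
  unfold ell
  split
  · next h => exact Or.inr ⟨(Nat.find_spec h).1, (Nat.find_spec h).2.2⟩
  · exact Or.inl rfl

theorem exists_size_sub_div_lt_of_heavyCount_le_one {k : ℕ} {ε : ℝ} {f : List Bool → Bool}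
    {l : List (Fla X)} (hn : 2 ≤ l.length) (hnk : l.length ≤ k) (hε : 0 < ε) (hε1 : ε ≤ 1)
    (hheavy : heavyCount k ε (.gate f l) ≤ 1) :
    ∃ j, ∃ hj : j < l.length, ((size (.gate f l) : ℝ) - size l[j]) / size (.gate f l) < ε := by
  have hell : ell k ε (.gate f l) ≤ 2 := by
    rw [heavyCount, children] at hheavy
    omega
  rcases ell_spec k ε (.gate f l) with he | ⟨hi1, hlt⟩
  · omega
  set i := ell k ε (.gate f l)
  set S := size (.gate f l)
  set s := sortedChildSizes (.gate f l)
  set x := ε / (4 * k)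
  obtain ⟨j, hj, hsize⟩ :=
    exists_size_gate_le (f := f) (l := l) (List.ne_nil_of_length_pos (by omega))
  have hM : s.getD 1 0 ≤ s.getD (i - 1) 0 := by
    interval_cases i
    · exact getD_one_le_getD_zero (sortedChildSizes_pairwise _)
    · rfl
  have hk : (2 : ℝ) ≤ k := by exact_mod_cast hn.trans hnk
  have hx0 : 0 ≤ x := by positivity
  have hx1 : x ≤ 1 := by rw [div_le_one (by positivity)]; linarith
  have hS : (0 : ℝ) < S := by
    by_contra! h
    rw [le_antisymm h S.cast_nonneg, zero_mul] at hlt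
    exact (Nat.cast_nonneg _).not_gt hlt
  have hn1 : (1 : ℝ) ≤ (l.length - 1 : ℕ) := by exact_mod_cast (by omega : 1 ≤ l.length - 1)
  refine ⟨j, hj, (div_lt_iff₀ hS).2 ?_⟩
  calc (S : ℝ) - size l[j] ≤ ((l.length - 1 : ℕ) : ℝ) * s.getD (i - 1) 0 := by
        rw [sub_le_iff_le_add']; exact_mod_cast hsize.trans (by gcongr)
    _ < ((l.length - 1 : ℕ) : ℝ) * (S * x ^ i) := by gcongr
    _ ≤ k * (S * x) := by
        gcongr
        · exact_mod_cast (by omega : l.length - 1 ≤ k)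
        · exact pow_le_of_le_one hx0 hx1 (by omega)
    _ = ε / 4 * S := by simp only [x]; field_simp
    _ < ε * S := by nlinarith

end Fla

open Fla in
/-- in a `k`-`x`-basic read-once formula, an unforceable-gate
vertex from which `σ` is `ε`-far from evaluating to `b` has at least two heavy
children. -/
theorem unforceable_two_heavy_children {X : Type} (k : ℕ) (f : List Bool → Bool)
    (l : List (Fla X)) (Φu : Fla X) (hΦ : Φu = Fla.gate f l)
    (hbasic : KxBasic k Φu) (hro : Φu.ReadOnce)
    (σ : X → Bool) (b : Bool) (ε : ℝ) (hε : 0 < ε)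
    (hfar : EpsFar Φu b σ ε) :
    2 ≤ heavyCount k ε Φu := by
  subst hΦ
  obtain ⟨hn, hnk, hf, hsub⟩ : 2 ≤ l.length ∧ l.length ≤ k ∧ Unforceable f l.length ∧
      ∀ ψ ∈ l, KxBasic k ψ := by
    cases hbasic with | gate _ _ h₁ h₂ h₃ h₄ => exact ⟨h₁, h₂, h₃, h₄⟩
  have hl : (l.flatMap vars).Nodup := by simpa [ReadOnce] using hro
  have hreal : ∀ ψ ∈ l, Realizable ψ := fun ψ hψ =>
    (hsub ψ hψ).realizable (readOnce_of_mem hl hψ)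
  by_contra! hheavy
  obtain ⟨j, hj, hlight⟩ := exists_size_sub_div_lt_of_heavyCount_le_one hn hnk hε
    ((hbasic.realizable hro).le_one_of_epsFar hfar) (Nat.le_of_lt_succ hheavy)
  obtain ⟨σ', hσ', hkeep⟩ := exists_eval_gate_eq_of_unforceable hl hreal hf hj b σ
  have hclose := hamming_le_of_sublist (vars_sublist_vars_gate (f := f) (l.getElem_mem hj)) hkeep
  exact (hfar σ' hσ').not_gt (hclose.trans_lt hlight)
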